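/- arXiv:1305.1365 — 5 statements merged into one kernel-verified Lean document; each statement's English description precedes it below -/
import Mathlib

section
/- There exists a constant C > 0 independent of n such that for every positive integer n and all x ∈ [−1,1], |√(1−x²) · T_n''(x)| ≤ C·n³. -/
/-!
Put `x = cos θ`. Since `T_n' = n U_{n-1}` and `U_{m+2} = 2 T_{m+2} + U_m`, the quantity
`V_m(θ) = sin θ · U_m'(cos θ)` satisfies `V_{m+2} = 2 (m + 2) sin ((m + 2) θ) + V_m`, using
`sin θ · U_{m+1}(cos θ) = sin ((m + 2) θ)`. Hence `|V_m| ≤ m (m + 2)`, and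
`|sin θ · T_n''(cos θ)| = n |V_{n-1}| ≤ (n - 1) n (n + 1) ≤ n³`, so `C = 1` works.
-/

open Polynomial Polynomial.Chebyshev Real

namespace Polynomial.Chebyshev

theorem derivative_derivative_T (R : Type*) [CommRing R] (n : ℤ) :
    derivative (derivative (T R n)) = n * derivative (U R (n - 1)) := by
  rw [T_derivative_eq_U, derivative_mul, derivative_intCast, zero_mul, zero_add]

theorem sin_mul_derivative_U_real_eval_cos_add_two (m : ℕ) (θ : ℝ) :
    sin θ * (derivative (U ℝ (m + 2))).eval (cos θ) =
      2 * (m + 2) * sin ((m + 2) * θ) + sin θ * (derivative (U ℝ m)).eval (cos θ) := by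
  have hU : (U ℝ (m + 1)).eval (cos θ) * sin θ = sin ((m + 2) * θ) := by
    rw [U_real_cos]; push_cast; ring_nf
  rw [U_eq_two_mul_T_add_U, derivative_add, derivative_mul, T_derivative_eq_U,
    show (m : ℤ) + 2 - 1 = m + 1 by ring]
  simp only [derivative_ofNat, zero_mul, zero_add, eval_add, eval_mul, eval_ofNat, eval_intCast]
  push_cast
  linear_combination 2 * (m + 2) * hU

theorem abs_sin_mul_derivative_U_real_eval_cos_le :
    ∀ (m : ℕ) (θ : ℝ), |sin θ * (derivative (U ℝ m)).eval (cos θ)| ≤ m * (m + 2)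
  | 0, θ => by simp
  | 1, θ => by
    simp only [Nat.cast_one, U_one, derivative_mul, derivative_ofNat, derivative_X, zero_mul,
      zero_add, mul_one, eval_ofNat, abs_mul, Nat.abs_ofNat, one_mul]
    linarith [abs_sin_le_one θ]
  | m + 2, θ => by
    push_cast
    rw [sin_mul_derivative_U_real_eval_cos_add_two]
    have ih := abs_sin_mul_derivative_U_real_eval_cos_le m θ
    have := abs_sin_le_one ((m + 2) * θ)
    calc _ ≤ |2 * (m + 2) * sin ((m + 2) * θ)| + |sin θ * (derivative (U ℝ m)).eval (cos θ)| :=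
          abs_add_le _ _
      _ ≤ 2 * (m + 2) + m * (m + 2) := by
          gcongr
          rw [abs_mul, abs_of_pos (by positivity)]
          nlinarith
      _ ≤ (m + 2) * (m + 2 + 2) := by nlinarith

theorem abs_sin_mul_derivative_derivative_T_real_eval_cos_le (n : ℕ) (θ : ℝ) :
    |sin θ * (derivative (derivative (T ℝ n))).eval (cos θ)| ≤ n ^ 3 := by
  cases n with
  | zero => simp
  | succ m =>
    rw [derivative_derivative_T, show ((m + 1 : ℕ) : ℤ) - 1 = m by push_cast; ring]
    calc _ = ((m + 1 : ℕ) : ℝ) * |sin θ * (derivative (U ℝ m)).eval (cos θ)| := by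
          rw [eval_mul, eval_intCast, Int.cast_natCast, mul_left_comm, abs_mul, Nat.abs_cast]
      _ ≤ (m + 1) * (m * (m + 2)) := by
          push_cast; gcongr; exact abs_sin_mul_derivative_U_real_eval_cos_le m θ
      _ ≤ ((m + 1 : ℕ) : ℝ) ^ 3 := by push_cast; nlinarith

end Polynomial.Chebyshev

/-- There exists C > 0 independent of n with |√(1−x²)·T_n''(x)| ≤ C·n³ on [−1,1]. -/
theorem chebyshev_weighted_second_derivative_T_bound :
    ∃ C : ℝ, 0 < C ∧ ∀ n : ℕ, 0 < n → ∀ x ∈ Set.Icc (-1 : ℝ) 1,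
      |Real.sqrt (1 - x ^ 2) *
          (Polynomial.derivative (Polynomial.derivative (T ℝ n))).eval x| ≤ C * (n : ℝ) ^ 3 := by
  refine ⟨1, one_pos, fun n _ x ⟨hx₁, hx₂⟩ => ?_⟩
  have := abs_sin_mul_derivative_derivative_T_real_eval_cos_le n (arccos x)
  rwa [sin_arccos, cos_arccos hx₁ hx₂, ← one_mul ((n : ℝ) ^ 3)] at this
end

section
/- Let α ∈ [−1,1] and for n ≥ 2 define p_n^α(x) = (T_n(x) − T_n(α))/(x − α). Then its derivative satisfies sup_{x∈[−1,1]} √(1−x²)·|(p_n^α)'(x)| ≤ 2·∑_{j=0}^{n−2} (j+1)(n−1−j) = (n−1)n(n+1)/3 < n³/3. -/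
open Polynomial Polynomial.Chebyshev

private lemma aux_abs_sin_nat_mul_le (θ : ℝ) : ∀ k : ℕ, |Real.sin (k * θ)| ≤ k * |Real.sin θ| := by
  intro k
  induction k with
  | zero => simp
  | succ k ih =>
    have h : Real.sin ((k + 1 : ℕ) * θ)
        = Real.sin (k * θ) * Real.cos θ + Real.cos (k * θ) * Real.sin θ := by
      push_cast; rw [add_mul, one_mul, Real.sin_add]
    rw [h]
    have h1 : |Real.sin (k * θ) * Real.cos θ| ≤ |Real.sin (k * θ)| := by
      rw [abs_mul]
      exact mul_le_of_le_one_right (abs_nonneg _) (Real.abs_cos_le_one θ)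
    have h2 : |Real.cos (k * θ) * Real.sin θ| ≤ |Real.sin θ| := by
      rw [abs_mul]
      exact mul_le_of_le_one_left (abs_nonneg _) (Real.abs_cos_le_one _)
    calc |Real.sin (k * θ) * Real.cos θ + Real.cos (k * θ) * Real.sin θ|
        ≤ |Real.sin (k * θ) * Real.cos θ| + |Real.cos (k * θ) * Real.sin θ| := abs_add_le _ _
      _ ≤ |Real.sin (k * θ)| + |Real.sin θ| := add_le_add h1 h2
      _ ≤ k * |Real.sin θ| + |Real.sin θ| := by linarith
      _ = (k + 1 : ℕ) * |Real.sin θ| := by push_cast; ring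

private lemma aux_sqrt_mul_U_le (x : ℝ) (hx : x ∈ Set.Icc (-1 : ℝ) 1) (m : ℤ) :
    Real.sqrt (1 - x ^ 2) * |(U ℝ m).eval x| ≤ 1 := by
  obtain ⟨θ, hθ, hcos⟩ := Real.surjOn_cos hx
  subst hcos
  rw [← Real.abs_sin_eq_sqrt_one_sub_cos_sq, ← abs_mul, mul_comm, U_real_cos]
  exact Real.abs_sin_le_one _

private lemma aux_abs_U_le (j : ℕ) (α : ℝ) (hα : α ∈ Set.Icc (-1 : ℝ) 1) :
    |(U ℝ (j : ℤ)).eval α| ≤ (j : ℝ) + 1 := by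
  have hclosed : IsClosed {a : ℝ | |(U ℝ (j : ℤ)).eval a| ≤ (j : ℝ) + 1} :=
    isClosed_le (continuous_abs.comp ((U ℝ (j : ℤ)).continuous_aeval)) continuous_const
  have hIoo : Set.Ioo (-1 : ℝ) 1 ⊆ {a : ℝ | |(U ℝ (j : ℤ)).eval a| ≤ (j : ℝ) + 1} := by
    intro a ha
    obtain ⟨θ, hθ, hcos⟩ := Real.surjOn_cos (Set.Ioo_subset_Icc_self ha)
    subst hcos
    have hsin : 0 < Real.sin θ := by
      apply Real.sin_pos_of_pos_of_lt_pi
      · rcases lt_or_eq_of_le hθ.1 with h | h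
        · exact h
        · exfalso; rw [← h] at ha; simp at ha
      · rcases lt_or_eq_of_le hθ.2 with h | h
        · exact h
        · exfalso; rw [h] at ha; simp at ha
    have key : |(U ℝ (j : ℤ)).eval (Real.cos θ)| * Real.sin θ ≤ ((j : ℝ) + 1) * Real.sin θ := by
      calc |(U ℝ (j : ℤ)).eval (Real.cos θ)| * Real.sin θ
          = |(U ℝ (j : ℤ)).eval (Real.cos θ) * Real.sin θ| := by
            rw [abs_mul, abs_of_pos hsin]
        _ = |Real.sin (((j : ℤ) + 1) * θ)| := by rw [U_real_cos]
        _ = |Real.sin ((j + 1 : ℕ) * θ)| := by norm_num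
        _ ≤ (j + 1 : ℕ) * |Real.sin θ| := aux_abs_sin_nat_mul_le θ (j + 1)
        _ = ((j : ℝ) + 1) * Real.sin θ := by rw [abs_of_pos hsin]; push_cast; ring
    exact le_of_mul_le_mul_right key hsin
  have := hclosed.closure_subset_iff.mpr hIoo
  rw [closure_Ioo (by norm_num : (-1 : ℝ) ≠ 1)] at this
  exact this hα

noncomputable def Qpoly (α : ℝ) (m : ℕ) : Polynomial ℝ :=
  2 * ∑ j ∈ Finset.range m, C ((U ℝ (j : ℤ)).eval α) * T ℝ ((m : ℤ) - 1 - j)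
    - C ((U ℝ ((m : ℤ) - 1)).eval α)

private lemma aux_Qrec (α : ℝ) (m : ℕ) :
    Qpoly α (m + 2) = 2 * X * Qpoly α (m + 1) - Qpoly α m
      + 2 * C ((T ℝ ((m : ℤ) + 1)).eval α) := by
  unfold Qpoly
  push_cast
  have i1 : ∀ j : ℕ, (m : ℤ) + 2 - 1 - (j : ℤ) = (m : ℤ) + 1 - j := fun j => by ring
  have i2 : ∀ j : ℕ, (m : ℤ) + 1 - 1 - (j : ℤ) = (m : ℤ) - j := fun j => by ring
  have i3 : (m : ℤ) + 2 - 1 = (m : ℤ) + 1 := by ring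
  have i4 : (m : ℤ) + 1 - 1 = (m : ℤ) := by ring
  simp only [i1, i2, i3, i4]
  have hA2 : ∑ j ∈ Finset.range (m + 2), C ((U ℝ (j : ℤ)).eval α) * T ℝ ((m : ℤ) + 1 - j)
      = (∑ j ∈ Finset.range (m + 1), C ((U ℝ (j : ℤ)).eval α) * T ℝ ((m : ℤ) + 1 - j))
        + C ((U ℝ ((m : ℤ) + 1)).eval α) := by
    rw [Finset.sum_range_succ]
    push_cast
    rw [show (m : ℤ) + 1 - ((m : ℤ) + 1) = 0 by ring, T_zero, mul_one]
  have hX : (2 * X : Polynomial ℝ) * ∑ j ∈ Finset.range (m + 1),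
        C ((U ℝ (j : ℤ)).eval α) * T ℝ ((m : ℤ) - j)
      = (∑ j ∈ Finset.range (m + 1), C ((U ℝ (j : ℤ)).eval α) * T ℝ ((m : ℤ) + 1 - j))
        + ∑ j ∈ Finset.range (m + 1), C ((U ℝ (j : ℤ)).eval α) * T ℝ ((m : ℤ) - 1 - j) := by
    rw [Finset.mul_sum, ← Finset.sum_add_distrib]
    refine Finset.sum_congr rfl fun j _ => ?_
    rw [show (m : ℤ) - j = ((m : ℤ) - 1 - j) + 1 by ring,
      show (m : ℤ) + 1 - j = ((m : ℤ) - 1 - j) + 2 by ring]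
    rw [T_add_two]
    ring
  have hlast : ∑ j ∈ Finset.range (m + 1), C ((U ℝ (j : ℤ)).eval α) * T ℝ ((m : ℤ) - 1 - j)
      = (∑ j ∈ Finset.range m, C ((U ℝ (j : ℤ)).eval α) * T ℝ ((m : ℤ) - 1 - j))
        + C ((U ℝ (m : ℤ)).eval α) * X := by
    rw [Finset.sum_range_succ]
    rw [show (m : ℤ) - 1 - ((m : ℕ) : ℤ) = -1 by push_cast; ring, T_neg_one]
  have hu : C ((U ℝ ((m : ℤ) + 1)).eval α)
      = C ((U ℝ ((m : ℤ) - 1)).eval α) + 2 * C ((T ℝ ((m : ℤ) + 1)).eval α) := by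
    have h1 := U_add_one ℝ (m : ℤ)
    have h2 := U_eq_X_mul_U_add_T ℝ (m : ℤ)
    have h3 : U ℝ ((m : ℤ) + 1) = U ℝ ((m : ℤ) - 1) + 2 * T ℝ ((m : ℤ) + 1) := by
      linear_combination 2 * h2 - h1
    rw [h3]
    simp only [eval_add, eval_mul, eval_ofNat, map_add, map_mul, map_ofNat]
  linear_combination 2 * hA2 - 2 * hX - 2 * hlast + hu

private lemma aux_key (α : ℝ) : ∀ m : ℕ,
    (X - C α) * Qpoly α m = T ℝ (m : ℤ) - C ((T ℝ (m : ℤ)).eval α) := by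
  have H : ∀ m : ℕ, ((X - C α) * Qpoly α m = T ℝ (m : ℤ) - C ((T ℝ (m : ℤ)).eval α)) ∧
      ((X - C α) * Qpoly α (m + 1) = T ℝ ((m : ℤ) + 1) - C ((T ℝ ((m : ℤ) + 1)).eval α)) := by
    intro m
    induction m with
    | zero =>
      constructor
      · unfold Qpoly
        simp [U_neg_one, T_zero]
      · unfold Qpoly
        norm_num [U_zero, T_zero, T_one]
    | succ k ih =>
      obtain ⟨ih1, ih2⟩ := ih
      have hcast : ((k + 1 : ℕ) : ℤ) = (k : ℤ) + 1 := by push_cast; ring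
      refine ⟨by rw [hcast]; exact ih2, ?_⟩
      have hrec := aux_Qrec α k
      have hT := T_add_two ℝ (k : ℤ)
      have hC : C ((T ℝ ((k : ℤ) + 2)).eval α)
          = 2 * C α * C ((T ℝ ((k : ℤ) + 1)).eval α) - C ((T ℝ (k : ℤ)).eval α) := by
        rw [hT]
        simp only [eval_sub, eval_mul, eval_ofNat, eval_X, map_sub, map_mul, map_ofNat]
      rw [hcast, show (k : ℤ) + 1 + 1 = (k : ℤ) + 2 by ring,
        show k + 1 + 1 = k + 2 by ring, hrec, hC, hT]
      linear_combination (2 * (X : Polynomial ℝ)) * ih2 - ih1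
  exact fun m => (H m).1

private lemma aux_g1 (m : ℕ) : ∑ j ∈ Finset.range m, ((j : ℝ) + 1) = m * (m + 1) / 2 := by
  induction m with
  | zero => simp
  | succ k ih => rw [Finset.sum_range_succ, ih]; push_cast; ring

private lemma aux_g2 (m : ℕ) :
    ∑ j ∈ Finset.range m, ((j : ℝ) + 1) * ((m : ℝ) - j) = m * (m + 1) * (m + 2) / 6 := by
  induction m with
  | zero => simp
  | succ k ih =>
    rw [Finset.sum_range_succ]
    have h : ∀ j : ℕ, ((j : ℝ) + 1) * (((k + 1 : ℕ) : ℝ) - j)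
        = ((j : ℝ) + 1) * ((k : ℝ) - j) + ((j : ℝ) + 1) := by intro j; push_cast; ring
    simp only [h]
    rw [Finset.sum_add_distrib, ih, aux_g1]
    push_cast; ring

/-- For α ∈ [−1,1], n ≥ 2, any polynomial p with (x−α)·p(x) = T_n(x) − T_n(α) satisfies
√(1−x²)·|p'(x)| ≤ 2·∑_{j=0}^{n−2}(j+1)(n−1−j) = (n−1)n(n+1)/3 < n³/3 on [−1,1]. -/
theorem chebyshev_divided_difference_derivative_bound (α : ℝ)
    (hα : α ∈ Set.Icc (-1 : ℝ) 1) (n : ℕ) (hn : 2 ≤ n) (p : Polynomial ℝ)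
    (hp : ∀ x : ℝ, (x - α) * p.eval x = (T ℝ n).eval x - (T ℝ n).eval α) :
    (∀ x ∈ Set.Icc (-1 : ℝ) 1,
        Real.sqrt (1 - x ^ 2) * |(Polynomial.derivative p).eval x| ≤
          2 * ∑ j ∈ Finset.range (n - 1), ((j : ℝ) + 1) * ((n : ℝ) - 1 - (j : ℝ))) ∧
      2 * ∑ j ∈ Finset.range (n - 1), ((j : ℝ) + 1) * ((n : ℝ) - 1 - (j : ℝ))
        = ((n : ℝ) - 1) * (n : ℝ) * ((n : ℝ) + 1) / 3 ∧
      ((n : ℝ) - 1) * (n : ℝ) * ((n : ℝ) + 1) / 3 < (n : ℝ) ^ 3 / 3 := by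
  have hn1 : 1 ≤ n := by omega
  have hncast : ((n - 1 : ℕ) : ℝ) = (n : ℝ) - 1 := by
    rw [Nat.cast_sub hn1]; norm_num
  have hnR : (2 : ℝ) ≤ (n : ℝ) := by exact_mod_cast hn
  -- second part
  have part2 : 2 * ∑ j ∈ Finset.range (n - 1), ((j : ℝ) + 1) * ((n : ℝ) - 1 - (j : ℝ))
      = ((n : ℝ) - 1) * (n : ℝ) * ((n : ℝ) + 1) / 3 := by
    have h : ∀ j : ℕ, ((j : ℝ) + 1) * ((n : ℝ) - 1 - (j : ℝ))
        = ((j : ℝ) + 1) * (((n - 1 : ℕ) : ℝ) - j) := by intro j; rw [hncast]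
    simp only [h]
    rw [aux_g2 (n - 1), hncast]
    ring
  refine ⟨?_, part2, by nlinarith⟩
  -- identify p with Qpoly
  have h1 : (X - C α) * p = T ℝ (n : ℤ) - C ((T ℝ (n : ℤ)).eval α) := by
    apply Polynomial.funext
    intro x
    simp only [eval_mul, eval_sub, eval_X, eval_C]
    exact hp x
  have hpQ : p = Qpoly α n :=
    mul_left_cancel₀ (X_sub_C_ne_zero α) (h1.trans (aux_key α n).symm)
  -- derivative evaluation
  have hevald : ∀ x : ℝ, (derivative p).eval x
      = ∑ j ∈ Finset.range n, 2 * (U ℝ (j : ℤ)).eval α *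
          (((((n : ℤ) - 1 - j) : ℤ) : ℝ) * (U ℝ ((n : ℤ) - 1 - j - 1)).eval x) := by
    intro x
    rw [hpQ]
    unfold Qpoly
    rw [derivative_sub, derivative_C, sub_zero]
    rw [show ((2 : Polynomial ℝ) * ∑ j ∈ Finset.range n,
        C ((U ℝ (j : ℤ)).eval α) * T ℝ ((n : ℤ) - 1 - j))
      = ∑ j ∈ Finset.range n, (2 * C ((U ℝ (j : ℤ)).eval α)) * T ℝ ((n : ℤ) - 1 - j) by
        rw [Finset.mul_sum]; exact Finset.sum_congr rfl fun j _ => by ring]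
    rw [derivative_sum]
    rw [eval_finset_sum]
    refine Finset.sum_congr rfl fun j _ => ?_
    rw [derivative_mul, T_derivative_eq_U]
    have : derivative (2 * C ((U ℝ (j : ℤ)).eval α)) = 0 := by
      simp [derivative_C]
    rw [this, zero_mul, zero_add]
    simp only [eval_mul, eval_intCast, eval_C, eval_ofNat]
  intro x hx
  rw [hevald x]
  have hsq : (0 : ℝ) ≤ Real.sqrt (1 - x ^ 2) := Real.sqrt_nonneg _
  calc Real.sqrt (1 - x ^ 2) * |∑ j ∈ Finset.range n, 2 * (U ℝ (j : ℤ)).eval α *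
          (((((n : ℤ) - 1 - j) : ℤ) : ℝ) * (U ℝ ((n : ℤ) - 1 - j - 1)).eval x)|
      ≤ Real.sqrt (1 - x ^ 2) * ∑ j ∈ Finset.range n, |2 * (U ℝ (j : ℤ)).eval α *
          (((((n : ℤ) - 1 - j) : ℤ) : ℝ) * (U ℝ ((n : ℤ) - 1 - j - 1)).eval x)| :=
        mul_le_mul_of_nonneg_left (Finset.abs_sum_le_sum_abs _ _) hsq
    _ = ∑ j ∈ Finset.range n, Real.sqrt (1 - x ^ 2) * |2 * (U ℝ (j : ℤ)).eval α *
          (((((n : ℤ) - 1 - j) : ℤ) : ℝ) * (U ℝ ((n : ℤ) - 1 - j - 1)).eval x)| :=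
        Finset.mul_sum _ _ _
    _ ≤ ∑ j ∈ Finset.range n, 2 * ((j : ℝ) + 1) * ((n : ℝ) - 1 - j) := by
        refine Finset.sum_le_sum fun j hj => ?_
        have hjn : j + 1 ≤ n := Finset.mem_range.mp hj
        have hjR : (j : ℝ) + 1 ≤ (n : ℝ) := by exact_mod_cast hjn
        have hcpos : (0 : ℝ) ≤ (n : ℝ) - 1 - j := by linarith
        have hcc : (((((n : ℤ) - 1 - j) : ℤ)) : ℝ) = (n : ℝ) - 1 - j := by push_cast; ring
        have hA := aux_abs_U_le j α hα
        have hB := aux_sqrt_mul_U_le x hx ((n : ℤ) - 1 - j - 1)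
        have habs : |2 * (U ℝ (j : ℤ)).eval α *
            (((((n : ℤ) - 1 - j) : ℤ) : ℝ) * (U ℝ ((n : ℤ) - 1 - j - 1)).eval x)|
            = 2 * |(U ℝ (j : ℤ)).eval α| * (((n : ℝ) - 1 - j) * |(U ℝ ((n : ℤ) - 1 - j - 1)).eval x|) := by
          rw [abs_mul, abs_mul, abs_mul, hcc, abs_of_nonneg hcpos]
          norm_num
        rw [habs]
        have step : |(U ℝ (j : ℤ)).eval α| * (Real.sqrt (1 - x ^ 2) *
            |(U ℝ ((n : ℤ) - 1 - j - 1)).eval x|) ≤ ((j : ℝ) + 1) * 1 :=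
          mul_le_mul hA hB (by positivity) (by positivity)
        calc Real.sqrt (1 - x ^ 2) * (2 * |(U ℝ (j : ℤ)).eval α| *
              (((n : ℝ) - 1 - j) * |(U ℝ ((n : ℤ) - 1 - j - 1)).eval x|))
            = 2 * ((n : ℝ) - 1 - j) * (|(U ℝ (j : ℤ)).eval α| * (Real.sqrt (1 - x ^ 2) *
              |(U ℝ ((n : ℤ) - 1 - j - 1)).eval x|)) := by ring
          _ ≤ 2 * ((n : ℝ) - 1 - j) * (((j : ℝ) + 1) * 1) := by
              apply mul_le_mul_of_nonneg_left step (by linarith)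
          _ = 2 * ((j : ℝ) + 1) * ((n : ℝ) - 1 - j) := by ring
    _ = 2 * ∑ j ∈ Finset.range (n - 1), ((j : ℝ) + 1) * ((n : ℝ) - 1 - (j : ℝ)) := by
        rw [show n = (n - 1) + 1 by omega, Finset.sum_range_succ]
        rw [show ((n - 1) + 1 : ℕ) = n by omega]
        have hz : 2 * (((n - 1 : ℕ) : ℝ) + 1) * ((n : ℝ) - 1 - ((n - 1 : ℕ) : ℝ)) = 0 := by
          rw [hncast]; ring
        rw [hz, add_zero, Finset.mul_sum]
        exact Finset.sum_congr rfl fun j _ => by ring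
end

section
/- There exists C > 0 such that for every α ∈ [−1,1], every x ∈ [−1,1], and every g ∈ H¹(−1,1) with g(α) = 0, one has |g(x)| ≤ C·|x−α|^{1/4} · (∫_{−1}^{1} |g'(s)|²√(1−s²) ds)^{1/2}. -/
/-!
By Cauchy–Schwarz against the weight `w s = √(1 - s²)`,
`|g x| = |∫_α^x g'| ≤ (∫ |g'|² w)^{1/2} (∫_α^x w⁻¹)^{1/2}`. The singular factor is controlled
through `w⁻¹ ≤ (1 - s)^{-1/2} + (1 + s)^{-1/2}`: integrating, and using `√u - √v ≤ √(u - v)`,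
`∫_α^x w⁻¹ ≤ 4 |x - α|^{1/2}`, which gives the constant `C = 2`.
-/

open MeasureTheory Set Real intervalIntegral

lemma Real.sqrt_sub_sqrt_le_sqrt_sub (x y : ℝ) : √x - √y ≤ √(x - y) := by
  rcases le_total y 0 with hy | hy
  · rw [sqrt_eq_zero'.2 hy, sub_zero]
    exact sqrt_le_sqrt (by linarith)
  rcases le_total x y with hxy | hyx
  · linarith [sqrt_le_sqrt hxy, sqrt_nonneg (x - y)]
  · nlinarith [sq_sqrt hy, sq_sqrt (sub_nonneg.2 hyx), sq_sqrt (hy.trans hyx),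
      sqrt_nonneg x, sqrt_nonneg y, sqrt_nonneg (x - y)]

lemma integral_sub_rpow_neg_half (c a b : ℝ) :
    ∫ s in a..b, (c - s) ^ (-(1 / 2) : ℝ) = 2 * (√(c - a) - √(c - b)) := by
  rw [intervalIntegral.integral_comp_sub_left (fun s => s ^ (-(1 / 2) : ℝ)),
    integral_rpow (Or.inl (by norm_num)), sqrt_eq_rpow, sqrt_eq_rpow]
  norm_num
  ring

lemma integral_add_rpow_neg_half (c a b : ℝ) :
    ∫ s in a..b, (c + s) ^ (-(1 / 2) : ℝ) = 2 * (√(c + b) - √(c + a)) := by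
  rw [intervalIntegral.integral_comp_add_left (fun s => s ^ (-(1 / 2) : ℝ)),
    integral_rpow (Or.inl (by norm_num)), sqrt_eq_rpow, sqrt_eq_rpow]
  norm_num
  ring

lemma intervalIntegrable_sub_rpow_neg_half (c a b : ℝ) :
    IntervalIntegrable (fun s => (c - s) ^ (-(1 / 2) : ℝ)) volume a b := by
  simpa using (intervalIntegrable_rpow' (a := c - a) (b := c - b) (by norm_num)).comp_sub_left c

lemma intervalIntegrable_add_rpow_neg_half (c a b : ℝ) :
    IntervalIntegrable (fun s => (c + s) ^ (-(1 / 2) : ℝ)) volume a b := by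
  simpa using (intervalIntegrable_rpow' (a := c + a) (b := c + b) (by norm_num)).comp_add_left c

lemma integral_sub_rpow_neg_half_add_add_rpow_neg_half_le (c a b : ℝ) :
    ∫ s in a..b, ((c - s) ^ (-(1 / 2) : ℝ) + (c + s) ^ (-(1 / 2) : ℝ)) ≤ 4 * √(b - a) := by
  rw [integral_add (intervalIntegrable_sub_rpow_neg_half c a b)
    (intervalIntegrable_add_rpow_neg_half c a b), integral_sub_rpow_neg_half,
    integral_add_rpow_neg_half]
  have h₁ := sqrt_sub_sqrt_le_sqrt_sub (c - a) (c - b)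
  have h₂ := sqrt_sub_sqrt_le_sqrt_sub (c + b) (c + a)
  rw [show c - a - (c - b) = b - a by ring] at h₁
  rw [show c + b - (c + a) = b - a by ring] at h₂
  linarith

lemma inv_sqrt_one_sub_sq_le {s : ℝ} (hs : s ∈ Ioo (-1) 1) :
    (√(1 - s ^ 2))⁻¹ ≤ (1 - s) ^ (-(1 / 2) : ℝ) + (1 + s) ^ (-(1 / 2) : ℝ) := by
  have hu : 0 < 1 - s := by linarith [hs.2]
  have hv : 0 < 1 + s := by linarith [hs.1]
  rw [show 1 - s ^ 2 = (1 - s) * (1 + s) by ring, sqrt_mul hu.le, rpow_neg hu.le,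
    rpow_neg hv.le, ← sqrt_eq_rpow, ← sqrt_eq_rpow]
  set p := √(1 - s)
  set q := √(1 + s)
  have hp : 0 < p := sqrt_pos.2 hu
  have hq : 0 < q := sqrt_pos.2 hv
  have hpq : p ^ 2 + q ^ 2 = 2 := by rw [sq_sqrt hu.le, sq_sqrt hv.le]; ring
  have hsum : 1 ≤ p + q := by nlinarith
  calc (p * q)⁻¹ ≤ (p + q) * (p * q)⁻¹ := le_mul_of_one_le_left (by positivity) hsum
    _ = p⁻¹ + q⁻¹ := by field_simp; ring

theorem integral_abs_le_sqrt_integral_sq_mul_mul_sqrt_integral_inv {α : Type*}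
    [MeasurableSpace α] {μ : Measure α} {f w : α → ℝ} (hw : ∀ᵐ x ∂μ, 0 < w x)
    (hf : AEStronglyMeasurable f μ) (hwm : AEMeasurable w μ) (hfw : Integrable (fun x => f x ^ 2 * w x) μ)
    (hwinv : Integrable (fun x => (w x)⁻¹) μ) :
    ∫ x, |f x| ∂μ ≤ √(∫ x, f x ^ 2 * w x ∂μ) * √(∫ x, (w x)⁻¹ ∂μ) := by
  set F := fun x => |f x| * √(w x)
  set G := fun x => (√(w x))⁻¹
  have hF : ∀ᵐ x ∂μ, F x ^ 2 = f x ^ 2 * w x := by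
    filter_upwards [hw] with x hx
    rw [mul_pow, sq_abs, sq_sqrt hx.le]
  have hG : ∀ᵐ x ∂μ, G x ^ 2 = (w x)⁻¹ := by
    filter_upwards [hw] with x hx
    rw [inv_pow, sq_sqrt hx.le]
  have hFG : ∀ᵐ x ∂μ, |f x| = F x * G x := by
    filter_upwards [hw] with x hx
    rw [mul_assoc, mul_inv_cancel₀ (sqrt_pos.2 hx).ne', mul_one]
  have hFm : MemLp F (ENNReal.ofReal 2) μ := by
    rw [ENNReal.ofReal_ofNat]
    refine (memLp_two_iff_integrable_sq (hf.norm.mul hwm.sqrt.aestronglyMeasurable :)).2 ?_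
    exact hfw.congr (hF.mono fun x hx => hx.symm)
  have hGm : MemLp G (ENNReal.ofReal 2) μ := by
    rw [ENNReal.ofReal_ofNat]
    refine (memLp_two_iff_integrable_sq (hwm.sqrt.inv.aestronglyMeasurable :)).2 ?_
    exact hwinv.congr (hG.mono fun x hx => hx.symm)
  have holder := integral_mul_le_Lp_mul_Lq_of_nonneg Real.HolderConjugate.two_two
    (Filter.Eventually.of_forall fun x => by positivity)
    (Filter.Eventually.of_forall fun x => by positivity) hFm hGm
  simp only [rpow_two, ← sqrt_eq_rpow] at holder
  rwa [integral_congr_ae hFG, ← integral_congr_ae hF, ← integral_congr_ae hG]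

lemma continuous_sqrt_one_sub_sq : Continuous fun s : ℝ => √(1 - s ^ 2) := by fun_prop

lemma MeasureTheory.Integrable.mul_sqrt_one_sub_sq {μ : Measure ℝ} {f : ℝ → ℝ}
    (hf : Integrable f μ) : Integrable (fun s => f s * √(1 - s ^ 2)) μ := by
  refine hf.mul_bdd (c := 1) continuous_sqrt_one_sub_sq.aestronglyMeasurable
    (Filter.Eventually.of_forall fun s => ?_)
  rw [norm_of_nonneg (sqrt_nonneg _)]
  exact sqrt_le_one.2 (by nlinarith [sq_nonneg s])

lemma integrableOn_inv_sqrt_one_sub_sq {a b : ℝ} (ha : -1 ≤ a) (hb : b ≤ 1) :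
    IntegrableOn (fun s => (√(1 - s ^ 2))⁻¹) (Ioo a b) := by
  have hM := ((intervalIntegrable_sub_rpow_neg_half 1 a b).add
    (intervalIntegrable_add_rpow_neg_half 1 a b)).def'.mono_set
    (Ioo_subset_Ioc_self.trans Ioc_subset_uIoc)
  refine hM.mono' continuous_sqrt_one_sub_sq.measurable.inv.aestronglyMeasurable
    ((ae_restrict_iff' measurableSet_Ioo).2 (Filter.Eventually.of_forall fun s hs => ?_))
  rw [norm_of_nonneg (inv_nonneg.2 (sqrt_nonneg _))]
  exact inv_sqrt_one_sub_sq_le ⟨ha.trans_lt hs.1, hs.2.trans_le hb⟩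

lemma setIntegral_inv_sqrt_one_sub_sq_le {a b : ℝ} (ha : -1 ≤ a) (hab : a ≤ b) (hb : b ≤ 1) :
    ∫ s in Ioo a b, (√(1 - s ^ 2))⁻¹ ≤ 4 * √(b - a) :=
  calc ∫ s in Ioo a b, (√(1 - s ^ 2))⁻¹
      ≤ ∫ s in Ioo a b, ((1 - s) ^ (-(1 / 2) : ℝ) + (1 + s) ^ (-(1 / 2) : ℝ)) := by
        refine setIntegral_mono_on (integrableOn_inv_sqrt_one_sub_sq ha hb) ?_ measurableSet_Ioo
          fun s hs => inv_sqrt_one_sub_sq_le ⟨ha.trans_lt hs.1, hs.2.trans_le hb⟩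
        exact ((intervalIntegrable_sub_rpow_neg_half 1 a b).add
          (intervalIntegrable_add_rpow_neg_half 1 a b)).1.mono_set Ioo_subset_Ioc_self
    _ = ∫ s in a..b, ((1 - s) ^ (-(1 / 2) : ℝ) + (1 + s) ^ (-(1 / 2) : ℝ)) := by
        rw [integral_of_le hab, integral_Ioc_eq_integral_Ioo]
    _ ≤ 4 * √(b - a) := integral_sub_rpow_neg_half_add_add_rpow_neg_half_le 1 a b

lemma Real.sqrt_four_mul_sqrt {x : ℝ} (hx : 0 ≤ x) : √(4 * √x) = 2 * x ^ (1 / 4 : ℝ) := by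
  rw [sqrt_mul (by norm_num), show (4 : ℝ) = 2 ^ 2 by norm_num, sqrt_sq zero_le_two,
    sqrt_eq_rpow √x, sqrt_eq_rpow x, ← rpow_mul hx]
  norm_num

lemma abs_integral_le_mul_weighted_norm {a b : ℝ} {g' : ℝ → ℝ} (ha : -1 ≤ a) (hab : a ≤ b)
    (hb : b ≤ 1) (h₁ : IntervalIntegrable g' volume (-1) 1)
    (h₂ : IntervalIntegrable (fun s => g' s ^ 2) volume (-1) 1) :
    |∫ t in a..b, g' t| ≤ 2 * (b - a) ^ (1 / 4 : ℝ) *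
      (∫ s in (-1 : ℝ)..1, |g' s| ^ 2 * √(1 - s ^ 2)) ^ (1 / 2 : ℝ) := by
  have hIoo : Ioo a b ⊆ Ioc (-1) 1 := Ioo_subset_Ioc_self.trans (Ioc_subset_Ioc ha hb)
  have hweighted : ∫ s in Ioo a b, g' s ^ 2 * √(1 - s ^ 2) ≤
      ∫ s in (-1 : ℝ)..1, g' s ^ 2 * √(1 - s ^ 2) := by
    rw [integral_of_le (by norm_num)]
    exact setIntegral_mono_set h₂.1.integrable.mul_sqrt_one_sub_sq
      (Filter.Eventually.of_forall fun s => by positivity) hIoo.eventuallyLE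
  have hpos : ∀ s ∈ Ioo a b, 0 < √(1 - s ^ 2) := fun s hs =>
    sqrt_pos.2 (by nlinarith [ha.trans_lt hs.1, hs.2.trans_le hb])
  simp only [sq_abs]
  calc |∫ t in a..b, g' t| ≤ ∫ t in a..b, |g' t| := abs_integral_le_integral_abs hab
    _ = ∫ t in Ioo a b, |g' t| := by rw [integral_of_le hab, integral_Ioc_eq_integral_Ioo]
    _ ≤ √(∫ s in Ioo a b, g' s ^ 2 * √(1 - s ^ 2)) * √(∫ s in Ioo a b, (√(1 - s ^ 2))⁻¹) :=
        integral_abs_le_sqrt_integral_sq_mul_mul_sqrt_integral_inv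
          ((ae_restrict_iff' measurableSet_Ioo).2 (Filter.Eventually.of_forall hpos))
          (h₁.1.mono_set hIoo).aestronglyMeasurable continuous_sqrt_one_sub_sq.aemeasurable
          (h₂.1.mono_set hIoo).integrable.mul_sqrt_one_sub_sq
          (integrableOn_inv_sqrt_one_sub_sq ha hb)
    _ ≤ √(∫ s in (-1 : ℝ)..1, g' s ^ 2 * √(1 - s ^ 2)) * √(4 * √(b - a)) :=
        mul_le_mul (sqrt_le_sqrt hweighted)
          (sqrt_le_sqrt (setIntegral_inv_sqrt_one_sub_sq_le ha hab hb)) (sqrt_nonneg _)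
          (sqrt_nonneg _)
    _ = _ := by rw [sqrt_four_mul_sqrt (sub_nonneg.2 hab), sqrt_eq_rpow]; ring

/-- There exists C > 0 so that for every α ∈ [−1,1], every g ∈ H¹(−1,1) with g(α) = 0
(represented by its absolutely continuous representative with square-integrable
derivative g'), and every x ∈ [−1,1]:
|g(x)| ≤ C·|x−α|^{1/4}·(∫_{−1}^1 |g'(s)|²√(1−s²) ds)^{1/2}. -/
theorem pointwise_bound_of_vanishing_H1 :
    ∃ C : ℝ, 0 < C ∧ ∀ α ∈ Set.Icc (-1 : ℝ) 1, ∀ g g' : ℝ → ℝ,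
      IntervalIntegrable g' MeasureTheory.volume (-1) 1 →
      IntervalIntegrable (fun s => g' s ^ 2) MeasureTheory.volume (-1) 1 →
      (∀ x ∈ Set.Icc (-1 : ℝ) 1, g x = ∫ t in α..x, g' t) →
      ∀ x ∈ Set.Icc (-1 : ℝ) 1,
        |g x| ≤ C * |x - α| ^ ((1 : ℝ) / 4) *
          (∫ s in (-1 : ℝ)..1, |g' s| ^ 2 * Real.sqrt (1 - s ^ 2)) ^ ((1 : ℝ) / 2) := by
  refine ⟨2, two_pos, fun α hα g g' h₁ h₂ hg x hx => ?_⟩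
  rw [hg x hx]
  rcases le_total α x with hαx | hxα
  · rw [abs_of_nonneg (sub_nonneg.2 hαx)]
    exact abs_integral_le_mul_weighted_norm hα.1 hαx hx.2 h₁ h₂
  · rw [abs_of_nonpos (sub_nonpos.2 hxα), neg_sub, integral_symm, abs_neg]
    exact abs_integral_le_mul_weighted_norm hx.1 hxα hα.2 h₁ h₂
end

section
/- Let α ∈ [−1,1], ε > 0, and suppose a perturbed sequence η_n^{ε} satisfies η_{−1}^{ε} = 0, η_0^{ε} = η_0 + ε_0, and η_n^{ε} = γ_n + (2αn/(n+1))η_{n−1}^{ε} − ((n−1)/(n+1))η_{n−2}^{ε} + ε_n for n ≥ 1, where the unperturbed sequence η_n satisfies the same recurrence with all ε_n = 0, and |ε_n| ≤ ε for all n. Then for all N ≥ 0, |η_N − η_N^{ε}| ≤ ε·(1/(N+1))·∑_{j=0}^{N}(j+1)|U_{N−j}(α)| ≤ ε·(N+2)(N+3)/6. -/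
open Polynomial Polynomial.Chebyshev

lemma abs_T_le (α : ℝ) (hα : α ∈ Set.Icc (-1 : ℝ) 1) (n : ℤ) :
    |(T ℝ n).eval α| ≤ 1 := by
  have h : α = Real.cos (Real.arccos α) := (Real.cos_arccos hα.1 hα.2).symm
  rw [h, T_real_cos]
  exact Real.abs_cos_le_one _

lemma abs_U_le (α : ℝ) (hα : α ∈ Set.Icc (-1 : ℝ) 1) (m : ℕ) :
    |(U ℝ (m : ℤ)).eval α| ≤ (m : ℝ) + 1 := by
  have hαa : |α| ≤ 1 := abs_le.2 ⟨hα.1, hα.2⟩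
  induction m with
  | zero => simp
  | succ k ih =>
      have h := U_eq_X_mul_U_add_T ℝ (k : ℤ)
      have : ((k : ℤ) + 1) = ((k + 1 : ℕ) : ℤ) := by push_cast; ring
      rw [this] at h
      calc |(U ℝ ((k+1 : ℕ) : ℤ)).eval α|
          = |α * (U ℝ (k : ℤ)).eval α + (T ℝ ((k+1 : ℕ) : ℤ)).eval α| := by
            rw [h]; simp
        _ ≤ |α| * |(U ℝ (k : ℤ)).eval α| + |(T ℝ ((k+1 : ℕ):ℤ)).eval α| := by
            rw [← abs_mul]; exact abs_add_le _ _
        _ ≤ 1 * ((k : ℝ) + 1) + 1 := by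
            gcongr
            exact abs_T_le α hα _
        _ ≤ ((k+1 : ℕ) : ℝ) + 1 := by push_cast; ring_nf; norm_num

lemma gauss_sum (M : ℕ) : ∑ j ∈ Finset.range M, ((j : ℝ) + 1) = M * (M + 1) / 2 := by
  induction M with
  | zero => simp
  | succ k ih => rw [Finset.sum_range_succ, ih]; push_cast; ring

lemma triangle_sum (N : ℕ) :
    ∑ j ∈ Finset.range (N + 1), ((j : ℝ) + 1) * ((N : ℝ) - j + 1)
      = ((N : ℝ) + 1) * ((N : ℝ) + 2) * ((N : ℝ) + 3) / 6 := by
  induction N with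
  | zero => norm_num
  | succ k ih =>
      have split : ∀ j ∈ Finset.range (k + 2),
          ((j : ℝ) + 1) * (((k : ℕ) + 1 : ℝ) - j + 1)
            = ((j : ℝ) + 1) * ((k : ℝ) - j + 1) + ((j : ℝ) + 1) := by
        intro j _; push_cast; ring
      push_cast
      rw [Finset.sum_congr rfl split, Finset.sum_add_distrib,
        Finset.sum_range_succ (fun j => ((j : ℝ) + 1) * ((k : ℝ) - j + 1)), ih,
        gauss_sum]
      push_cast; ring

/-- Stability of the recurrence for the non-oscillatory weights: if the perturbed
sequence ηε satisfies the same recurrence as η up to perturbations ε_n with |ε_n| ≤ ε,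
then |η_N − ηε_N| ≤ ε·(1/(N+1))·∑_{j=0}^{N}(j+1)|U_{N−j}(α)| ≤ ε·(N+2)(N+3)/6. -/
theorem recurrence_stability (α : ℝ) (hα : α ∈ Set.Icc (-1 : ℝ) 1)
    (γ : ℤ → ℝ) (ε : ℝ) (hε : 0 < ε) (εs : ℤ → ℝ) (hεs : ∀ n : ℤ, |εs n| ≤ ε)
    (η ηε : ℤ → ℝ)
    (hη0 : η (-1) = 0) (hηε0 : ηε (-1) = 0) (hηε1 : ηε 0 = η 0 + εs 0)
    (hη : ∀ n : ℤ, 1 ≤ n →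
      η n = γ n + (2 * α * (n : ℝ) / ((n : ℝ) + 1)) * η (n - 1)
        - (((n : ℝ) - 1) / ((n : ℝ) + 1)) * η (n - 2))
    (hηε : ∀ n : ℤ, 1 ≤ n →
      ηε n = γ n + (2 * α * (n : ℝ) / ((n : ℝ) + 1)) * ηε (n - 1)
        - (((n : ℝ) - 1) / ((n : ℝ) + 1)) * ηε (n - 2) + εs n) :
    ∀ N : ℕ,
      |η N - ηε N| ≤
          ε * ((1 : ℝ) / ((N : ℝ) + 1) *
            ∑ j ∈ Finset.range (N + 1), ((j : ℝ) + 1) * |(U ℝ ((N : ℤ) - j)).eval α|) ∧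
        ε * ((1 : ℝ) / ((N : ℝ) + 1) *
            ∑ j ∈ Finset.range (N + 1), ((j : ℝ) + 1) * |(U ℝ ((N : ℤ) - j)).eval α|) ≤
          ε * ((N : ℝ) + 2) * ((N : ℝ) + 3) / 6 := by
  -- the scaled error
  set F : ℤ → ℝ := fun n => ((n : ℝ) + 1) * (η n - ηε n) with hF
  have hFrec : ∀ n : ℤ, 1 ≤ n →
      F n = 2 * α * F (n - 1) - F (n - 2) - ((n : ℝ) + 1) * εs n := by
    intro n hn
    have h1 := hη n hn
    have h2 := hηε n hn
    have hne : ((n : ℝ) + 1) ≠ 0 := by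
      have : (1 : ℝ) ≤ (n : ℝ) := by exact_mod_cast hn
      linarith
    have hd : η n - ηε n = 2 * α * (n : ℝ) / ((n : ℝ) + 1) * (η (n-1) - ηε (n-1))
        - (((n : ℝ) - 1) / ((n : ℝ) + 1)) * (η (n-2) - ηε (n-2)) - εs n := by
      rw [h1, h2]; ring
    simp only [hF]
    push_cast
    rw [hd]
    field_simp
    ring
  -- closed form for F N
  have key : ∀ N : ℕ, F N =
      -∑ j ∈ Finset.range (N + 1), ((j : ℝ) + 1) * (U ℝ ((N : ℤ) - j)).eval α * εs j := by
    intro N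
    induction N using Nat.strong_induction_on with
    | _ N ih =>
      match N with
      | 0 =>
          simp only [hF]
          simp [hηε1, U_zero]
      | 1 =>
          have h := hFrec 1 (le_refl 1)
          norm_num at h
          have hFm1 : F (-1) = 0 := by simp [hF]
          have hF0 : F 0 = -(εs 0) := by
            simp only [hF]
            rw [hηε1]; push_cast; ring
          rw [hFm1, hF0] at h
          simp only [Finset.sum_range_succ, Finset.sum_range_zero]
          norm_num [U_zero, U_one]
          rw [h]; push_cast; ring
      | (k+2) =>
          have hk1 := ih (k+1) (by omega)
          have hk := ih k (by omega)
          have hrec := hFrec ((k+2 : ℕ) : ℤ) (by exact_mod_cast Nat.le_add_left 1 (k+1))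
          have e1 : ((k+2 : ℕ) : ℤ) - 1 = ((k+1 : ℕ) : ℤ) := by push_cast; ring
          have e2 : ((k+2 : ℕ) : ℤ) - 2 = ((k : ℕ) : ℤ) := by push_cast; ring
          rw [e1, e2] at hrec
          have hterm : ∀ j ∈ Finset.range (k+2),
              ((j:ℝ)+1) * (U ℝ (((k+2:ℕ):ℤ) - j)).eval α * εs j
                = 2*α*(((j:ℝ)+1) * (U ℝ (((k+1:ℕ):ℤ) - j)).eval α * εs j)
                  - ((j:ℝ)+1) * (U ℝ ((k:ℤ) - j)).eval α * εs j := by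
            intro j hj
            have h := congrArg (Polynomial.eval α) (U_add_two ℝ ((k:ℤ) - j))
            simp only [eval_sub, eval_mul, eval_ofNat, eval_X] at h
            have e3 : ((k:ℤ) - j) + 2 = ((k+2:ℕ):ℤ) - j := by push_cast; ring
            have e4 : ((k:ℤ) - j) + 1 = ((k+1:ℕ):ℤ) - j := by push_cast; ring
            rw [e3, e4] at h
            rw [h]; ring
          have hsum :
              ∑ j ∈ Finset.range (k+2+1), ((j:ℝ)+1) * (U ℝ (((k+2:ℕ):ℤ) - j)).eval α * εs j
                = 2*α*(∑ j ∈ Finset.range (k+1+1), ((j:ℝ)+1) * (U ℝ (((k+1:ℕ):ℤ) - j)).eval α * εs j)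
                  - (∑ j ∈ Finset.range (k+1), ((j:ℝ)+1) * (U ℝ ((k:ℤ) - j)).eval α * εs j)
                  + (((k:ℝ)+2)+1) * εs ((k+2:ℕ)) := by
            rw [Finset.sum_range_succ, Finset.sum_congr rfl hterm, Finset.sum_sub_distrib,
              ← Finset.mul_sum]
            have hz : ((k+2:ℕ):ℤ) - ((k+2:ℕ) : ℤ) = 0 := by ring
            have hlast : ∑ j ∈ Finset.range (k+1+1), ((j:ℝ)+1) * (U ℝ ((k:ℤ) - j)).eval α * εs j
                = ∑ j ∈ Finset.range (k+1), ((j:ℝ)+1) * (U ℝ ((k:ℤ) - j)).eval α * εs j := by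
              rw [Finset.sum_range_succ]
              have : (k:ℤ) - ((k+1:ℕ):ℤ) = -1 := by push_cast; ring
              rw [this]
              simp [U_neg_one]
            rw [hlast, hz]
            push_cast
            simp [U_zero]
          rw [hsum, hrec, hk1, hk]
          push_cast
          ring
  intro N
  have hNpos : (0:ℝ) < (N:ℝ) + 1 := by positivity
  have habs : |F N| ≤ ε * ∑ j ∈ Finset.range (N+1), ((j:ℝ)+1) * |(U ℝ ((N:ℤ) - j)).eval α| := by
    rw [key N, abs_neg]
    calc |∑ j ∈ Finset.range (N+1), ((j:ℝ)+1) * (U ℝ ((N:ℤ) - j)).eval α * εs j|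
        ≤ ∑ j ∈ Finset.range (N+1), |((j:ℝ)+1) * (U ℝ ((N:ℤ) - j)).eval α * εs j| :=
          Finset.abs_sum_le_sum_abs _ _
      _ ≤ ∑ j ∈ Finset.range (N+1), ((j:ℝ)+1) * |(U ℝ ((N:ℤ) - j)).eval α| * ε := by
          apply Finset.sum_le_sum
          intro j hj
          rw [abs_mul, abs_mul, abs_of_nonneg (by positivity : (0:ℝ) ≤ (j:ℝ)+1)]
          gcongr
          exact hεs j
      _ = ε * ∑ j ∈ Finset.range (N+1), ((j:ℝ)+1) * |(U ℝ ((N:ℤ) - j)).eval α| := by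
          rw [Finset.mul_sum]; exact Finset.sum_congr rfl (fun j _ => by ring)
  have h1 : |η N - ηε N| ≤ ε * ((1:ℝ) / ((N:ℝ)+1) *
      ∑ j ∈ Finset.range (N+1), ((j:ℝ)+1) * |(U ℝ ((N:ℤ) - j)).eval α|) := by
    have hFval : |F (N:ℤ)| = ((N:ℝ)+1) * |η N - ηε N| := by
      simp only [hF]
      push_cast
      rw [abs_mul, abs_of_nonneg hNpos.le]
    rw [hFval] at habs
    rw [div_mul_eq_mul_div, one_mul, mul_div_assoc'] at *
    rw [le_div_iff₀ hNpos]
    linarith [habs]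
  refine ⟨h1, ?_⟩
  have hS : ∑ j ∈ Finset.range (N+1), ((j:ℝ)+1) * |(U ℝ ((N:ℤ) - j)).eval α|
      ≤ ((N:ℝ)+1) * ((N:ℝ)+2) * ((N:ℝ)+3) / 6 := by
    calc ∑ j ∈ Finset.range (N+1), ((j:ℝ)+1) * |(U ℝ ((N:ℤ) - j)).eval α|
        ≤ ∑ j ∈ Finset.range (N+1), ((j:ℝ)+1) * ((N:ℝ) - j + 1) := by
          apply Finset.sum_le_sum
          intro j hj
          have hjN : j ≤ N := by
            have := Finset.mem_range.1 hj; omega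
          have hc : ((N:ℤ) - j) = ((N - j : ℕ) : ℤ) := by
            push_cast [hjN]; ring
          rw [hc]
          gcongr
          have := abs_U_le α hα (N - j)
          calc |(U ℝ ((N - j : ℕ) : ℤ)).eval α| ≤ ((N - j : ℕ) : ℝ) + 1 := this
            _ = (N:ℝ) - j + 1 := by push_cast [hjN]; ring
      _ = ((N:ℝ)+1) * ((N:ℝ)+2) * ((N:ℝ)+3) / 6 := triangle_sum N
  calc ε * ((1:ℝ) / ((N:ℝ)+1) *
        ∑ j ∈ Finset.range (N+1), ((j:ℝ)+1) * |(U ℝ ((N:ℤ) - j)).eval α|)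
      ≤ ε * ((1:ℝ) / ((N:ℝ)+1) * (((N:ℝ)+1) * ((N:ℝ)+2) * ((N:ℝ)+3) / 6)) := by gcongr
    _ = ε * ((N:ℝ)+2) * ((N:ℝ)+3) / 6 := by field_simp
end

section
/- Let k ≥ 2 and N > k, and let A be the (N − ⌊k⌋) × (N − ⌊k⌋) complex tridiagonal matrix with diagonal entries 2(⌊k⌋+m)/(ik) for m = 1, …, N−⌊k⌋ (last diagonal entry 2(N−1)/(ik)), superdiagonal entries 1, and subdiagonal entries −1. Then A is invertible and ‖A^{−1}‖_∞ < (k+2)/2, where ‖·‖_∞ is the operator norm induced by the max norm. -/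
/-!
Writing `F = ⌊k⌋`, row `i` of `A` has diagonal entry of modulus `2(F + i + 1)/k` and at most two
off-diagonal entries of modulus `1`, only one of them in row `0`. Since `k ≤ 2F` and `k < F + 1`,
every row is diagonally dominant with margin `2/k`, and for such a matrix the maximum principle
`‖A v‖_∞ ≥ (2/k) ‖v‖_∞` (read off at a coordinate where `|v_i|` is maximal) gives
`‖A⁻¹‖_∞ ≤ k/2 < (k + 2)/2` (Varah's bound).
-/

open Complex

open Finset

namespace Matrix

open scoped Matrix.Norms.Operator

variable {n 𝕜 : Type*} [Fintype n]

theorem sum_norm_le_linfty_opNorm {m : Type*} [Fintype m] [SeminormedAddCommGroup 𝕜]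
    (A : Matrix m n 𝕜) (i : m) : ∑ j, ‖A i j‖ ≤ ‖A‖ := by
  rw [linfty_opNorm_def]
  simpa using NNReal.coe_le_coe.2 (le_sup (f := fun i => ∑ j, ‖A i j‖₊) (mem_univ i))

variable [DecidableEq n]

def IsRowDiagDominant [NormedField 𝕜] (A : Matrix n n 𝕜) (α : ℝ) : Prop :=
  ∀ i, α + ∑ j ∈ univ.erase i, ‖A i j‖ ≤ ‖A i i‖

namespace IsRowDiagDominant

section

variable [NormedField 𝕜] {A : Matrix n n 𝕜} {α : ℝ}

theorem mul_norm_le_norm_mulVec (hA : A.IsRowDiagDominant α) (v : n → 𝕜) :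
    α * ‖v‖ ≤ ‖A *ᵥ v‖ := by
  cases isEmpty_or_nonempty n
  · simp [Subsingleton.elim v 0]
  obtain ⟨i, -, hi⟩ := exists_mem_eq_sup univ univ_nonempty fun i => ‖v i‖₊
  have hvi : ‖v i‖ = ‖v‖ := by rw [Pi.norm_def, hi]; rfl
  have hsplit : (A *ᵥ v) i = A i i * v i + ∑ j ∈ univ.erase i, A i j * v j :=
    (add_sum_erase _ _ (mem_univ i)).symm
  have hoff : ‖∑ j ∈ univ.erase i, A i j * v j‖ ≤ (∑ j ∈ univ.erase i, ‖A i j‖) * ‖v‖ := by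
    rw [sum_mul]
    refine (norm_sum_le _ _).trans (sum_le_sum fun j _ => ?_)
    rw [norm_mul]
    exact mul_le_mul_of_nonneg_left (norm_le_pi_norm v j) (norm_nonneg _)
  have hdiag : ‖A i i‖ * ‖v‖ ≤ ‖(A *ᵥ v) i‖ + ‖∑ j ∈ univ.erase i, A i j * v j‖ := by
    rw [← hvi, ← norm_mul, hsplit]
    exact norm_le_add_norm_add _ _
  calc α * ‖v‖ ≤ (‖A i i‖ - ∑ j ∈ univ.erase i, ‖A i j‖) * ‖v‖ :=
        mul_le_mul_of_nonneg_right (by linarith [hA i]) (norm_nonneg v)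
    _ ≤ ‖(A *ᵥ v) i‖ := by linarith
    _ ≤ ‖A *ᵥ v‖ := norm_le_pi_norm _ i

theorem isUnit (hA : A.IsRowDiagDominant α) (hα : 0 < α) : IsUnit A :=
  (isUnit_iff_isUnit_det A).2 <| isUnit_iff_ne_zero.2 <|
    det_ne_zero_of_sum_row_lt_diag fun i => by linarith [hA i]

end

variable [RCLike 𝕜] {A : Matrix n n 𝕜} {α : ℝ}

theorem linfty_opNorm_inv_le (hA : A.IsRowDiagDominant α) (hα : 0 < α) : ‖A⁻¹‖ ≤ α⁻¹ := by
  rw [linfty_opNorm_eq_opNorm]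
  refine ContinuousLinearMap.opNorm_le_bound _ (inv_nonneg.2 hα.le) fun w => ?_
  have hw := hA.mul_norm_le_norm_mulVec (A⁻¹ *ᵥ w)
  rw [mulVec_mulVec, mul_nonsing_inv _ ((isUnit_iff_isUnit_det A).1 (hA.isUnit hα)),
    one_mulVec] at hw
  rwa [le_inv_mul_iff₀ hα]

theorem sum_norm_inv_le (hA : A.IsRowDiagDominant α) (hα : 0 < α) (i : n) :
    ∑ j, ‖A⁻¹ i j‖ ≤ α⁻¹ :=
  (sum_norm_le_linfty_opNorm A⁻¹ i).trans (hA.linfty_opNorm_inv_le hα)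

end IsRowDiagDominant

theorem sum_erase_norm_le_of_tridiagonal {E : Type*} [SeminormedAddCommGroup E] {m : ℕ}
    {A : Matrix (Fin m) (Fin m) E}
    (hband : ∀ i j : Fin m, i ≠ j → (j : ℕ) ≠ i + 1 → (i : ℕ) ≠ j + 1 → A i j = 0)
    (hle : ∀ i j : Fin m, i ≠ j → ‖A i j‖ ≤ 1) (i : Fin m) :
    ∑ j ∈ univ.erase i, ‖A i j‖ ≤ if (i : ℕ) = 0 then 1 else 2 := by
  have hpt : ∀ j ∈ univ.erase i, ‖A i j‖ ≤
      (if (j : ℕ) = i + 1 then 1 else 0) + (if (i : ℕ) = j + 1 then 1 else 0) := by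
    intro j hj
    have hij := (ne_of_mem_erase hj).symm
    by_cases hsup : (j : ℕ) = i + 1
    · rw [if_pos hsup, if_neg (by omega), add_zero]
      exact hle i j hij
    by_cases hsub : (i : ℕ) = j + 1
    · rw [if_neg hsup, if_pos hsub, zero_add]
      exact hle i j hij
    simp [hband i j hij hsup hsub, hsup, hsub]
  refine (sum_le_sum hpt).trans ?_
  refine (sum_le_sum_of_subset_of_nonneg (erase_subset i univ) fun j _ _ => by positivity).trans ?_
  rw [Fin.sum_univ_eq_sum_range (fun j => (if j = (i : ℕ) + 1 then (1 : ℝ) else 0) +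
    (if (i : ℕ) = j + 1 then 1 else 0)), sum_add_distrib, sum_ite_eq']
  have hsup : (if (i : ℕ) + 1 ∈ range m then (1 : ℝ) else 0) ≤ 1 := by split_ifs <;> norm_num
  have hsub : ∑ j ∈ range m, (if (i : ℕ) = j + 1 then (1 : ℝ) else 0) ≤
      if (i : ℕ) = 0 then 0 else 1 := by
    rcases (i : ℕ) with _ | i
    · simp
    · simp only [Nat.add_right_cancel_iff, sum_ite_eq, Nat.add_one_ne_zero, if_false]
      split_ifs <;> norm_num
  split_ifs at hsub ⊢ <;> linarith

end Matrix

open Matrix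

theorem tridiagonal_inverse_bound_general (k : ℝ) (hk : 2 ≤ k) (N : ℕ) :
    ∀ A : Matrix (Fin (N - (⌊k⌋).toNat)) (Fin (N - (⌊k⌋).toNat)) ℂ,
      (∀ i j, A i j =
        if (i : ℕ) = (j : ℕ) then
          2 * (((⌊k⌋ : ℤ) : ℂ) + (i : ℕ) + 1) / (Complex.I * (k : ℂ))
        else if (j : ℕ) = (i : ℕ) + 1 then 1
        else if (i : ℕ) = (j : ℕ) + 1 then -1
        else 0) →
      IsUnit A ∧ ∀ i, ∑ j, ‖A⁻¹ i j‖ < (k + 2) / 2 := by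
  intro A hA
  have hk₀ : 0 < k := by linarith
  have hfloor : (0 : ℝ) ≤ ⌊k⌋ := by exact_mod_cast Int.floor_nonneg.2 hk₀.le
  have hdiag : ∀ i, ‖A i i‖ = 2 * (⌊k⌋ + (i : ℕ) + 1) / k := fun i => by
    have hcast : ((⌊k⌋ : ℤ) : ℂ) + (i : ℕ) + 1 = ((⌊k⌋ + (i : ℕ) + 1 : ℝ) : ℂ) := by
      push_cast; rfl
    rw [hA, if_pos rfl, hcast, norm_div, norm_mul, norm_mul, norm_I, norm_real, norm_real,
      RCLike.norm_ofNat, Real.norm_of_nonneg (by positivity), Real.norm_of_nonneg hk₀.le, one_mul]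
  have hoff := sum_erase_norm_le_of_tridiagonal (A := A)
    (fun i j hij hsup hsub => by simp [hA, Fin.val_ne_of_ne hij, hsup, hsub])
    (fun i j hij => by rw [hA, if_neg (Fin.val_ne_of_ne hij)]; split_ifs <;> simp)
  have hdom : A.IsRowDiagDominant (2 / k) := fun i => by
    have hrow := mul_le_mul_of_nonneg_right (hoff i) hk₀.le
    have hkF : k < ⌊k⌋ + 1 := Int.lt_floor_add_one k
    rw [hdiag, div_add' _ _ _ hk₀.ne', div_le_div_iff_of_pos_right hk₀]
    split_ifs at hrow with hi
    · rw [hi]; linarith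
    · have : (1 : ℝ) ≤ (i : ℕ) := by exact_mod_cast Nat.one_le_iff_ne_zero.2 hi
      linarith
  have hα : 0 < 2 / k := by positivity
  refine ⟨hdom.isUnit hα, fun i => ?_⟩
  calc ∑ j, ‖A⁻¹ i j‖ ≤ (2 / k)⁻¹ := hdom.sum_norm_inv_le hα i
    _ < (k + 2) / 2 := by rw [inv_div]; linarith

/-- The tridiagonal matrix A of size N − ⌊k⌋ with diagonal entries 2(⌊k⌋+m)/(ik),
superdiagonal 1 and subdiagonal −1 is invertible, and every row sum of the moduli of
the entries of A⁻¹ is < (k+2)/2; i.e. ‖A⁻¹‖_∞ < (k+2)/2 for the max-norm induced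
operator norm. -/
theorem tridiagonal_inverse_bound (k : ℝ) (hk : 2 ≤ k) (N : ℕ) (hN : (k : ℝ) < N) :
    ∀ A : Matrix (Fin (N - (⌊k⌋).toNat)) (Fin (N - (⌊k⌋).toNat)) ℂ,
      (∀ i j, A i j =
        if (i : ℕ) = (j : ℕ) then
          2 * (((⌊k⌋ : ℤ) : ℂ) + (i : ℕ) + 1) / (Complex.I * (k : ℂ))
        else if (j : ℕ) = (i : ℕ) + 1 then 1
        else if (i : ℕ) = (j : ℕ) + 1 then -1
        else 0) →
      IsUnit A ∧ ∀ i, ∑ j, ‖A⁻¹ i j‖ < (k + 2) / 2 :=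
  tridiagonal_inverse_bound_general k hk N
end
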